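/- arXiv:1506.02448 — 3 statements merged into one kernel-verified Lean document; each statement's English description precedes it below -/
import Mathlib

section
/- Let k > 0, r_max > 0 and let C ≥ 0 be a constant. The function r ↦ log( log(1 + k·(C + r)) / log(1 + k·r_max) ) is strictly concave on (0, ∞); that is, the natural logarithm of the normalized logarithmic utility function of the shifted rate C + r is strictly concave in r on (0, ∞). -/
theorem log_of_log_utility_shifted_strict_concave
    (k rmax C : ℝ) (hk : 0 < k) (hrmax : 0 < rmax) (hC : 0 ≤ C) :
    StrictConcaveOn ℝ (Set.Ioi 0)
      (fun r : ℝ => Real.log (Real.log (1 + k * (C + r)) / Real.log (1 + k * rmax))) := by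
  have hD : (0:ℝ) < Real.log (1 + k * rmax) := Real.log_pos (by nlinarith)
  constructor
  · exact convex_Ioi 0
  · intro x hx y hy hxy a b ha hb hab
    simp only [smul_eq_mul]
    have hx' : (0:ℝ) < x := hx
    have hy' : (0:ℝ) < y := hy
    set u := 1 + k * (C + x) with hu
    set v := 1 + k * (C + y) with hv
    have hu1 : 1 < u := by rw [hu]; nlinarith
    have hv1 : 1 < v := by rw [hv]; nlinarith
    have huv : u ≠ v := by
      intro h
      have h2 : k * (C + x) = k * (C + y) := by
        rw [hu, hv] at h; linarith
      have h3 : C + x = C + y := mul_left_cancel₀ hk.ne' h2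
      exact hxy (by linarith)
    have hLx : 0 < Real.log u := Real.log_pos hu1
    have hLy : 0 < Real.log v := Real.log_pos hv1
    have hmid : 1 + k * (C + (a * x + b * y)) = a * u + b * v := by
      rw [hu, hv]; linear_combination (-(1 + k * C)) * hab
    have step1 : a * Real.log u + b * Real.log v < Real.log (a * u + b * v) := by
      have := strictConcaveOn_log_Ioi.2 (show u ∈ Set.Ioi (0:ℝ) from zero_lt_one.trans hu1)
        (show v ∈ Set.Ioi (0:ℝ) from zero_lt_one.trans hv1) huv ha hb hab
      simpa [smul_eq_mul] using this
    have hpos : 0 < a * Real.log u + b * Real.log v := by positivity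
    have step2 : Real.log (a * Real.log u + b * Real.log v)
        < Real.log (Real.log (1 + k * (C + (a * x + b * y)))) := by
      rw [hmid]; exact Real.log_lt_log hpos step1
    have step3 : a * Real.log (Real.log u) + b * Real.log (Real.log v)
        ≤ Real.log (a * Real.log u + b * Real.log v) := by
      have := strictConcaveOn_log_Ioi.concaveOn.2 (show Real.log u ∈ Set.Ioi (0:ℝ) from hLx)
        (show Real.log v ∈ Set.Ioi (0:ℝ) from hLy) ha.le hb.le hab
      simpa [smul_eq_mul] using this
    have hLm : 0 < Real.log (1 + k * (C + (a * x + b * y))) := by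
      rw [hmid]; exact Real.log_pos (by nlinarith)
    rw [Real.log_div hLx.ne' hD.ne', Real.log_div hLy.ne' hD.ne',
      Real.log_div hLm.ne' hD.ne']
    have hfin : a * Real.log (Real.log u) + b * Real.log (Real.log v)
        < Real.log (Real.log (1 + k * (C + (a * x + b * y)))) := lt_of_le_of_lt step3 step2
    set d := Real.log (1 + k * rmax)
    have hexp : a * (Real.log (Real.log u) - Real.log d) + b * (Real.log (Real.log v) - Real.log d)
        = a * Real.log (Real.log u) + b * Real.log (Real.log v) - Real.log d := by
      linear_combination (-(Real.log d)) * hab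
    rw [hexp]
    linarith
end

section
/- For parameters a > 0 and b > 0, set c = (1 + e^{a·b})/e^{a·b} and d = 1/(1 + e^{a·b}), and define the normalized sigmoidal-like utility function U(x) = c·( 1/(1 + e^{−a·(x−b)}) − d ). Then the second derivative of x ↦ log(U(x)) is strictly negative for every x > 0; hence log ∘ U is strictly concave on (0, ∞). -/
/-! With `t = exp (a x)` and `E = exp (a b)` the utility simplifies to `U x = (t - 1) / (t + E)`, so
`log U x = log (t - 1) - log (t + E)`. Since `d/dx log (t + k) = a t / (t + k)` has derivative
`a² k t / (t + k)²`, the second derivative of `log ∘ U` is `-a² t / (t - 1)² - a² E t / (t + E)² < 0`. -/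

open Real Filter Topology

section ExpAffine

variable (a k : ℝ) {y : ℝ}

theorem hasDerivAt_exp_mul : HasDerivAt (fun y => exp (a * y)) (exp (a * y) * a) y := by
  simpa using ((hasDerivAt_id y).const_mul a).exp

theorem hasDerivAt_log_exp_mul_add (h : exp (a * y) + k ≠ 0) :
    HasDerivAt (fun y => log (exp (a * y) + k)) (a * exp (a * y) / (exp (a * y) + k)) y :=
  (((hasDerivAt_exp_mul a).add_const k).log h).congr_deriv (by ring)

theorem hasDerivAt_mul_exp_mul_div_exp_mul_add (h : exp (a * y) + k ≠ 0) :
    HasDerivAt (fun y => a * exp (a * y) / (exp (a * y) + k))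
      (a ^ 2 * k * exp (a * y) / (exp (a * y) + k) ^ 2) y :=
  (((hasDerivAt_exp_mul a).const_mul a).fun_div ((hasDerivAt_exp_mul a).add_const k) h).congr_deriv
    (by ring)

end ExpAffine

theorem deriv_deriv_eq_of_hasDerivAt {f f' : ℝ → ℝ} {f'' x : ℝ}
    (hf : ∀ᶠ y in 𝓝 x, HasDerivAt f (f' y) y) (hf' : HasDerivAt f' f'' x) :
    deriv (deriv f) x = f'' := by
  rw [EventuallyEq.deriv_eq (hf.mono fun _ hy => hy.deriv), hf'.deriv]

theorem normalized_sigmoid_eq (a b x : ℝ) :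
    (1 + exp (a * b)) / exp (a * b) * (1 / (1 + exp (-a * (x - b))) - 1 / (1 + exp (a * b))) =
      (exp (a * x) - 1) / (exp (a * x) + exp (a * b)) := by
  rw [show -a * (x - b) = a * b - a * x by ring, exp_sub]
  field_simp
  ring

theorem sigmoid_log_second_deriv_neg_and_concave_general
    (a b : ℝ) (ha : 0 < a)
    (c d : ℝ) (hc : c = (1 + Real.exp (a * b)) / Real.exp (a * b))
    (hd : d = 1 / (1 + Real.exp (a * b)))
    (U : ℝ → ℝ)
    (hU : ∀ x : ℝ, U x = c * (1 / (1 + Real.exp (-a * (x - b))) - d)) :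
    (∀ x : ℝ, 0 < x → deriv (deriv (fun y => Real.log (U y))) x < 0) ∧
    StrictConcaveOn ℝ (Set.Ioi 0) (fun y => Real.log (U y)) := by
  set E := exp (a * b)
  have hE : 0 < E := exp_pos _
  have exp_gt_one {y : ℝ} (hy : 0 < y) : 1 < exp (a * y) := one_lt_exp_iff.2 (mul_pos ha hy)
  set F' := fun y => a * exp (a * y) / (exp (a * y) + -1) - a * exp (a * y) / (exp (a * y) + E)
  have hF' {y : ℝ} (hy : 0 < y) : HasDerivAt (fun y => log (U y)) (F' y) y := by
    have hlog : ∀ᶠ z in 𝓝 y, log (U z) = log (exp (a * z) + -1) - log (exp (a * z) + E) := by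
      filter_upwards [Ioi_mem_nhds hy] with z hz
      have := exp_gt_one hz
      rw [hU, hc, hd, normalized_sigmoid_eq, log_div (by linarith) (by positivity), ← sub_eq_add_neg]
    have := exp_gt_one hy
    exact ((hasDerivAt_log_exp_mul_add a (-1) (by linarith)).sub
      (hasDerivAt_log_exp_mul_add a E (by positivity))).congr_of_eventuallyEq hlog
  have hneg (x : ℝ) (hx : 0 < x) : deriv (deriv (fun y => log (U y))) x < 0 := by
    have ht := exp_gt_one hx
    rw [deriv_deriv_eq_of_hasDerivAt (eventually_gt_nhds hx |>.mono fun _ => hF')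
      ((hasDerivAt_mul_exp_mul_div_exp_mul_add a (-1) (by linarith)).sub
        (hasDerivAt_mul_exp_mul_div_exp_mul_add a E (by positivity)))]
    have h₁ : 0 < a ^ 2 * exp (a * x) / (exp (a * x) + -1) ^ 2 := by
      have : 0 < exp (a * x) + -1 := by linarith
      positivity
    have h₂ : 0 < a ^ 2 * E * exp (a * x) / (exp (a * x) + E) ^ 2 := by positivity
    rw [mul_neg_one, neg_mul, neg_div]
    linarith
  exact ⟨hneg, strictConcaveOn_of_deriv2_neg' (convex_Ioi 0)
    (fun x hx => (hF' hx).continuousAt.continuousWithinAt) hneg⟩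

theorem sigmoid_log_second_deriv_neg_and_concave
    (a b : ℝ) (ha : 0 < a) (hb : 0 < b)
    (c d : ℝ) (hc : c = (1 + Real.exp (a * b)) / Real.exp (a * b))
    (hd : d = 1 / (1 + Real.exp (a * b)))
    (U : ℝ → ℝ)
    (hU : ∀ x : ℝ, U x = c * (1 / (1 + Real.exp (-a * (x - b))) - d)) :
    (∀ x : ℝ, 0 < x → deriv (deriv (fun y => Real.log (U y))) x < 0) ∧
    StrictConcaveOn ℝ (Set.Ioi 0) (fun y => Real.log (U y)) :=
  sigmoid_log_second_deriv_neg_and_concave_general a b ha c d hc hd U hU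
end

section
/- Let a > 0, b > 0, C ≥ 0 and C' ≥ 0 be constants, set c = (1 + e^{a·b})/e^{a·b} and d = 1/(1 + e^{a·b}), and define the normalized sigmoidal-like utility function U(x) = c·( 1/(1 + e^{−a·(x−b)}) − d ). Then the function r ↦ log( U(C + C' + r) ) is strictly concave on (0, ∞). -/
/-!
Clearing the normalisation constants gives `U x = (1 - e^{-a x}) / (1 + e^{a (b - x)})`, so for
`x > 0` the derivative of `log U` is `a / (e^{a x} - 1) + a / (1 + e^{a (x - b)})`, a strictly
decreasing function; hence `log U` is strictly concave on `(0, ∞)`, and the shift by `C + C' ≥ 0`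
keeps `(0, ∞)` inside that domain.
-/

open Real Set

noncomputable def sigmoidUtility (a b x : ℝ) : ℝ :=
  (1 + exp (a * b)) / exp (a * b) * (1 / (1 + exp (-a * (x - b))) - 1 / (1 + exp (a * b)))

theorem sigmoidUtility_eq (a b x : ℝ) :
    sigmoidUtility a b x = (1 - exp (-(a * x))) / (1 + exp (a * (b - x))) := by
  have hshift : exp (-a * (x - b)) = exp (-(a * x)) * exp (a * b) := by
    rw [← exp_add]; ring_nf
  have hrev : exp (a * (b - x)) = exp (-(a * x)) * exp (a * b) := by
    rw [← exp_add]; ring_nf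
  rw [sigmoidUtility, hshift, hrev]
  have : 0 < 1 + exp (-(a * x)) * exp (a * b) := by positivity
  field_simp
  ring

theorem one_sub_exp_neg_pos {t : ℝ} (ht : 0 < t) : 0 < 1 - exp (-t) := by
  simpa using ht

theorem log_sigmoidUtility {a x : ℝ} (b : ℝ) (hax : 0 < a * x) :
    log (sigmoidUtility a b x) = log (1 - exp (-(a * x))) - log (1 + exp (a * (b - x))) := by
  rw [sigmoidUtility_eq, log_div (one_sub_exp_neg_pos hax).ne' (by positivity)]

theorem hasDerivAt_log_one_sub_exp_neg_mul {a x : ℝ} (hax : 0 < a * x) :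
    HasDerivAt (fun x => log (1 - exp (-(a * x)))) (a / (exp (a * x) - 1)) x := by
  have hinner : HasDerivAt (fun x => 1 - exp (-(a * x))) (exp (-(a * x)) * a) x := by
    simpa using (((hasDerivAt_id x).const_mul a).neg.exp).const_sub 1
  convert hinner.log (one_sub_exp_neg_pos hax).ne' using 1
  have : 1 < exp (a * x) := one_lt_exp_iff.mpr hax
  rw [exp_neg]
  field_simp

theorem hasDerivAt_log_one_add_exp_mul_sub (a b x : ℝ) :
    HasDerivAt (fun x => log (1 + exp (a * (b - x)))) (-(a / (1 + exp (a * (x - b))))) x := by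
  have hinner : HasDerivAt (fun x => 1 + exp (a * (b - x))) (-(exp (a * (b - x)) * a)) x := by
    simpa using ((((hasDerivAt_id x).const_sub b).const_mul a).exp).const_add 1
  convert hinner.log (by positivity) using 1
  have hrev : exp (a * (b - x)) = (exp (a * (x - b)))⁻¹ := by
    rw [← exp_neg]; ring_nf
  rw [hrev]
  field_simp
  ring

theorem strictAntiOn_div_exp_mul_sub_one {a : ℝ} (ha : 0 < a) :
    StrictAntiOn (fun x => a / (exp (a * x) - 1)) (Ioi 0) := by
  intro x hx y hy hxy
  have hx' : 0 < exp (a * x) - 1 := by simpa using mul_pos ha hx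
  have hxy' : exp (a * x) < exp (a * y) := exp_lt_exp.mpr (by gcongr)
  exact div_lt_div_of_pos_left ha hx' (by linarith)

theorem antitone_div_one_add_exp_mul_sub {a : ℝ} (ha : 0 ≤ a) (b : ℝ) :
    Antitone (fun x => a / (1 + exp (a * (x - b)))) := by
  intro x y hxy
  dsimp only
  gcongr

theorem strictConcaveOn_log_sigmoidUtility {a : ℝ} (ha : 0 < a) (b : ℝ) :
    StrictConcaveOn ℝ (Ioi 0) (fun x => log (sigmoidUtility a b x)) := by
  have hderiv : ∀ x ∈ Ioi (0 : ℝ),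
      HasDerivAt (fun x => log (1 - exp (-(a * x))) - log (1 + exp (a * (b - x))))
        (a / (exp (a * x) - 1) + a / (1 + exp (a * (x - b)))) x := fun x hx => by
    simpa only [sub_neg_eq_add] using (hasDerivAt_log_one_sub_exp_neg_mul (mul_pos ha hx)).fun_sub
      (hasDerivAt_log_one_add_exp_mul_sub a b x)
  have hanti := (strictAntiOn_div_exp_mul_sub_one ha).add_antitone
    ((antitone_div_one_add_exp_mul_sub ha.le b).antitoneOn _)
  refine (StrictAntiOn.strictConcaveOn_of_deriv (convex_Ioi 0)
    (fun x hx => (hderiv x hx).continuousAt.continuousWithinAt) ?_).congr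
    fun x hx => (log_sigmoidUtility b (mul_pos ha hx)).symm
  rw [interior_Ioi]
  exact (EqOn.congr_strictAntiOn fun x hx => (hderiv x hx).deriv.symm).mp hanti

theorem sigmoid_log_shifted_strict_concave_general
    (a b C C' : ℝ) (ha : 0 < a) (hC : 0 ≤ C) (hC' : 0 ≤ C')
    (c d : ℝ) (hc : c = (1 + Real.exp (a * b)) / Real.exp (a * b))
    (hd : d = 1 / (1 + Real.exp (a * b)))
    (U : ℝ → ℝ)
    (hU : ∀ x : ℝ, U x = c * (1 / (1 + Real.exp (-a * (x - b))) - d)) :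
    StrictConcaveOn ℝ (Set.Ioi 0) (fun r : ℝ => Real.log (U (C + C' + r))) := by
  subst hc hd
  obtain rfl : U = sigmoidUtility a b := funext hU
  exact ((strictConcaveOn_log_sigmoidUtility ha b).translate_right (C + C')).subset
    (fun r hr => add_pos_of_nonneg_of_pos (add_nonneg hC hC') hr) (convex_Ioi 0)

theorem sigmoid_log_shifted_strict_concave
    (a b C C' : ℝ) (ha : 0 < a) (hb : 0 < b) (hC : 0 ≤ C) (hC' : 0 ≤ C')
    (c d : ℝ) (hc : c = (1 + Real.exp (a * b)) / Real.exp (a * b))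
    (hd : d = 1 / (1 + Real.exp (a * b)))
    (U : ℝ → ℝ)
    (hU : ∀ x : ℝ, U x = c * (1 / (1 + Real.exp (-a * (x - b))) - d)) :
    StrictConcaveOn ℝ (Set.Ioi 0) (fun r : ℝ => Real.log (U (C + C' + r))) :=
  sigmoid_log_shifted_strict_concave_general a b C C' ha hC hC' c d hc hd U hU
end
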